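/- Let K be a Markov kernel on E with invariant probability measure π, and suppose there exist i ∈ ℕ and ε ∈ (0,1] with K^i(x,·) ≥ ε K^i(y,·) for all x,y. Then for every bounded measurable f the series T(f)(x) := Σ_{j=0}^∞ [K^j(f)(x) − π(f)] converges absolutely and the resulting operator satisfies the uniform bound ‖T(f)‖ ≤ (2i/ε)·‖f‖. -/

import Mathlib

open MeasureTheory ProbabilityTheory

variable {E : Type} [MeasurableSpace E]

/-- Iterates of a Markov kernel: `kiter K n x` is the `n`-step transition law from `x`
(`kiter K 0 x = δ_x`). -/
noncomputable def kiter (K : Kernel E E) : ℕ → E → Measure E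
  | 0, x => Measure.dirac x
  | n + 1, x => Measure.bind (kiter K n x) (fun y => K y)

/-- The mcResolvent operator `T(f)(x) = Σ_{j≥0} [K^j(f)(x) − π(f)]`. -/
noncomputable def mcResolvent (K : Kernel E E) (π : Measure E) (f : E → ℝ) (x : E) : ℝ :=
  ∑' j : ℕ, ((∫ y, f y ∂(kiter K j x)) - ∫ y, f y ∂π)

/-!
Doeblin's argument. Since `(K ^ i) x ≥ ε • (K ^ i) y`, one can write `(K ^ i) x = ρ + ε • (K ^ i) y`
with `ρ` of mass `1 - ε`, so `i` steps of the chain shrink the oscillation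
`sup_{x,y} (g x - g y)` of a function `g` by the factor `1 - ε`. As `π f = π (K ^ j f)` is an
average of values of `K ^ j f`, this gives `|K ^ j f x - π f| ≤ 2 ‖f‖ (1 - ε) ^ ⌊j / i⌋`, and
`∑ j, (1 - ε) ^ ⌊j / i⌋ = i / ε`.
-/

section Integral

variable {α : Type*} [MeasurableSpace α] {μ ν : Measure α} {g : α → ℝ} {b C : ℝ}

lemma integrable_of_abs_le [IsFiniteMeasure μ] (hg : Measurable g) (hgC : ∀ x, |g x| ≤ C) :
    Integrable g μ :=
  .of_bound hg.aestronglyMeasurable C (.of_forall fun x => (Real.norm_eq_abs _).trans_le (hgC x))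

lemma abs_integral_le_of_abs_le [IsProbabilityMeasure μ] (hgC : ∀ x, |g x| ≤ C) :
    |∫ x, g x ∂μ| ≤ C := by
  simpa using norm_integral_le_of_norm_le_const (μ := μ)
    (.of_forall fun x => (Real.norm_eq_abs _).trans_le (hgC x))

lemma sub_integral_le_of_forall_sub_le [IsProbabilityMeasure μ] (hg : Integrable g μ) {x : α}
    (h : ∀ y, g x - g y ≤ b) : g x - ∫ y, g y ∂μ ≤ b :=
  calc g x - ∫ y, g y ∂μ = ∫ y, (g x - g y) ∂μ := by
        rw [integral_sub (integrable_const _) hg, integral_const, probReal_univ, one_smul]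
    _ ≤ ∫ _, b ∂μ := integral_mono ((integrable_const _).sub hg) (integrable_const b) h
    _ = b := by rw [integral_const, probReal_univ, one_smul]

lemma abs_sub_integral_le_of_forall_sub_le [IsProbabilityMeasure μ] (hg : Integrable g μ)
    (h : ∀ y z, g y - g z ≤ b) (x : α) : |g x - ∫ y, g y ∂μ| ≤ b := by
  have hneg := sub_integral_le_of_forall_sub_le hg.neg (x := x) fun y => by
    simp only [Pi.neg_apply, neg_sub_neg]; exact h y x
  simp only [Pi.neg_apply, integral_neg] at hneg
  exact abs_sub_le_iff.2 ⟨sub_integral_le_of_forall_sub_le hg (h x), by linarith⟩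

lemma integral_sub_integral_le_of_smul_le [IsProbabilityMeasure μ] [IsProbabilityMeasure ν]
    {ε : ℝ} (hε : 0 ≤ ε) (hle : ENNReal.ofReal ε • ν ≤ μ) (hgμ : Integrable g μ)
    (hgν : Integrable g ν) (h : ∀ y z, g y - g z ≤ b) :
    ∫ y, g y ∂μ - ∫ y, g y ∂ν ≤ (1 - ε) * b := by
  have : IsFiniteMeasure (ENNReal.ofReal ε • ν) := isFiniteMeasure_of_le μ hle
  set ρ := μ - ENNReal.ofReal ε • ν
  have hdecomp : ρ + ENNReal.ofReal ε • ν = μ := Measure.sub_add_cancel_of_le hle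
  have : IsFiniteMeasure ρ := isFiniteMeasure_of_le μ Measure.sub_le
  have hgρ : Integrable g ρ := hgμ.mono_measure Measure.sub_le
  have hmass : ρ.real Set.univ = 1 - ε := by
    have := congrArg (fun m : Measure α => m.real Set.univ) hdecomp
    rw [measureReal_add_apply, measureReal_ennreal_smul_apply, probReal_univ (μ := ν),
      probReal_univ (μ := μ), ENNReal.toReal_ofReal hε] at this
    linarith
  have hsplit : ∫ y, g y ∂μ = ∫ y, g y ∂ρ + ε * ∫ y, g y ∂ν := by
    rw [← hdecomp, integral_add_measure hgρ (hgν.smul_measure ENNReal.ofReal_ne_top),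
      integral_smul_measure, ENNReal.toReal_ofReal hε, smul_eq_mul]
  calc ∫ y, g y ∂μ - ∫ y, g y ∂ν = ∫ y, (g y - ∫ z, g z ∂ν) ∂ρ := by
        rw [integral_sub hgρ (integrable_const _), integral_const, hmass, hsplit, smul_eq_mul]
        ring
    _ ≤ ∫ _, b ∂ρ := integral_mono (hgρ.sub (integrable_const _)) (integrable_const b)
        fun y => sub_integral_le_of_forall_sub_le hgν (h y)
    _ = (1 - ε) * b := by rw [integral_const, hmass, smul_eq_mul]

end Integral

lemma hasSum_pow_div {r : ℝ} (hr0 : 0 ≤ r) (hr1 : r < 1) {i : ℕ} (hi : 0 < i) :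
    HasSum (fun j : ℕ => r ^ (j / i)) (i / (1 - r)) := by
  have : NeZero i := ⟨hi.ne'⟩
  have hfin : HasSum (fun _ : Fin i => (1 : ℝ)) i := by
    simpa using hasSum_fintype fun _ : Fin i => (1 : ℝ)
  have hprod := (hasSum_geometric_of_lt_one hr0 hr1).mul hfin
    ((summable_geometric_of_lt_one hr0 hr1).mul_of_nonneg hfin.summable
      (fun _ => pow_nonneg hr0 _) fun _ => zero_le_one)
  rw [div_eq_inv_mul]
  exact (Nat.divModEquiv i).hasSum_iff.2 hprod |>.congr_fun fun j => by simp

section Kernel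

variable {α β : Type*} [MeasurableSpace α] [MeasurableSpace β]

lemma integral_comp_measure {μ : Measure α} {η : Kernel α β} {g : β → ℝ}
    (hg : Integrable g (η ∘ₘ μ)) : ∫ y, g y ∂(η ∘ₘ μ) = ∫ x, ∫ y, g y ∂η x ∂μ := by
  rw [Measure.comp_eq_comp_const_apply] at hg ⊢
  rw [Kernel.integral_comp hg, Kernel.const_apply]

variable {κ : Kernel α α}

lemma ProbabilityTheory.Kernel.Invariant.pow {μ : Measure α} (h : κ.Invariant μ) (n : ℕ) :
    (κ ^ n).Invariant μ := by
  induction n with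
  | zero => exact Measure.id_comp
  | succ n ih => rw [pow_succ]; exact ih.comp h

variable [IsMarkovKernel κ] {f : α → ℝ} {C : ℝ} {i : ℕ} {ε : ℝ}

instance (n : ℕ) : IsMarkovKernel (κ ^ n) := by
  induction n with
  | zero => rw [pow_zero]; exact inferInstanceAs (IsMarkovKernel Kernel.id)
  | succ n ih => rw [pow_succ]; exact inferInstanceAs (IsMarkovKernel ((κ ^ n) ∘ₖ κ))

lemma integral_pow_sub_integral_pow_le (hε : 0 ≤ ε)
    (hmin : ∀ x y, ENNReal.ofReal ε • (κ ^ i) y ≤ (κ ^ i) x) (hf : Measurable f)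
    (hfC : ∀ x, |f x| ≤ C) (q r : ℕ) (x y : α) :
    ∫ z, f z ∂(κ ^ (i * q + r)) x - ∫ z, f z ∂(κ ^ (i * q + r)) y ≤ 2 * C * (1 - ε) ^ q := by
  induction q generalizing x y with
  | zero =>
    have hx := abs_le.1 (abs_integral_le_of_abs_le (μ := (κ ^ (i * 0 + r)) x) hfC)
    have hy := abs_le.1 (abs_integral_le_of_abs_le (μ := (κ ^ (i * 0 + r)) y) hfC)
    rw [pow_zero]
    linarith
  | succ q ih =>
    set g := fun z => ∫ w, f w ∂(κ ^ (i * q + r)) z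
    have hg : Measurable g := hf.stronglyMeasurable.integral_kernel.measurable
    have hgC : ∀ z, |g z| ≤ C := fun z => abs_integral_le_of_abs_le hfC
    have hstep : ∀ x, ∫ z, f z ∂(κ ^ (i * (q + 1) + r)) x = ∫ z, g z ∂(κ ^ i) x := fun x => by
      rw [show i * (q + 1) + r = i * q + r + i by ring, pow_add]
      exact Kernel.integral_comp
        (integrable_of_abs_le (μ := ((κ ^ (i * q + r)) ∘ₖ (κ ^ i)) x) hf hfC)
    calc _ = ∫ z, g z ∂(κ ^ i) x - ∫ z, g z ∂(κ ^ i) y := by rw [hstep, hstep]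
      _ ≤ (1 - ε) * (2 * C * (1 - ε) ^ q) :=
        integral_sub_integral_le_of_smul_le hε (hmin x y) (integrable_of_abs_le hg hgC)
          (integrable_of_abs_le hg hgC) ih
      _ = 2 * C * (1 - ε) ^ (q + 1) := by ring

lemma abs_integral_pow_sub_integral_le {π : Measure α} [IsProbabilityMeasure π]
    (hπ : κ.Invariant π) (hε : 0 ≤ ε) (hmin : ∀ x y, ENNReal.ofReal ε • (κ ^ i) y ≤ (κ ^ i) x)
    (hf : Measurable f) (hfC : ∀ x, |f x| ≤ C) (j : ℕ) (x : α) :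
    |∫ z, f z ∂(κ ^ j) x - ∫ z, f z ∂π| ≤ 2 * C * (1 - ε) ^ (j / i) := by
  have hπf : ∫ z, f z ∂π = ∫ y, ∫ z, f z ∂(κ ^ j) y ∂π := by
    conv_lhs => rw [← (hπ.pow j).def]
    exact integral_comp_measure (integrable_of_abs_le hf hfC)
  rw [hπf]
  refine abs_sub_integral_le_of_forall_sub_le
    (integrable_of_abs_le hf.stronglyMeasurable.integral_kernel.measurable
      fun _ => abs_integral_le_of_abs_le hfC) (fun y z => ?_) x
  simpa only [Nat.div_add_mod] using
    integral_pow_sub_integral_pow_le hε hmin hf hfC (j / i) (j % i) y z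

end Kernel

lemma kiter_eq_pow (K : Kernel E E) (n : ℕ) (x : E) : kiter K n x = (K ^ n) x := by
  induction n generalizing x with
  | zero => rfl
  | succ n ih => rw [kiter, ih, pow_succ']; exact (Kernel.comp_apply _ _ _).symm

/-- Under the uniform minorization `K^i(x,·) ≥ ε K^i(y,·)`, for every bounded measurable `f`
the mcResolvent series converges absolutely at every point, and `‖T(f)‖ ≤ (2i/ε)‖f‖`. -/
theorem mcResolvent_summable_and_bound (K : Kernel E E) [IsMarkovKernel K]
    (π : Measure E) [IsProbabilityMeasure π] (hπ : π.bind (fun x => K x) = π)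
    (i : ℕ) (hi : 1 ≤ i) (ε : ℝ) (hε : ε ∈ Set.Ioc (0 : ℝ) 1)
    (hmin : ∀ x y : E, ENNReal.ofReal ε • kiter K i y ≤ kiter K i x)
    (f : E → ℝ) (hf : Measurable f) (C : ℝ) (hfb : ∀ x, |f x| ≤ C) :
    (∀ x : E, Summable (fun j : ℕ => |(∫ y, f y ∂(kiter K j x)) - ∫ y, f y ∂π|)) ∧
      ∀ x : E, |mcResolvent K π f x| ≤ (2 * i / ε) * ⨆ z : E, |f z| := by
  simp only [mcResolvent, kiter_eq_pow] at hmin ⊢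
  set M := ⨆ z, |f z|
  have hfM : ∀ z, |f z| ≤ M := le_ciSup ⟨C, Set.forall_mem_range.2 hfb⟩
  have hdev := abs_integral_pow_sub_integral_le hπ hε.1.le hmin hf hfM
  have hgeom := (hasSum_pow_div (sub_nonneg.2 hε.2) (sub_lt_self 1 hε.1) hi).mul_left (2 * M)
  refine ⟨fun x => hgeom.summable.of_nonneg_of_le (fun _ => abs_nonneg _) (hdev · x),
    fun x => ?_⟩
  calc _ ≤ 2 * M * (i / (1 - (1 - ε))) := by
        simpa only [Real.norm_eq_abs] using tsum_of_norm_bounded hgeom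
          fun j => (Real.norm_eq_abs _).trans_le (hdev j x)
    _ = 2 * i / ε * M := by rw [sub_sub_cancel]; ring
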